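/- arXiv:1703.06448 — 4 statements merged into one kernel-verified Lean document; each statement's English description precedes it below -/
import Mathlib

section
/- Let d ≥ 2, γ ∈ (0,1], ν ∈ (0,2), and let b : [0,π] → [0,∞) satisfy, for some constants c₁, c₂ > 0: c₁ (sin θ)^{−(d−1)−ν} ≤ b(θ) ≤ c₂ (sin θ)^{−(d−1)−ν} whenever θ ∈ (0,π) and cos θ ≥ 0, and c₁ (sin θ)^{1+γ+ν} ≤ b(θ) ≤ c₂ (sin θ)^{1+γ+ν} whenever θ ∈ (0,π) and cos θ < 0. Define, for measurable f : ℝ^d → [0,∞] and v ≠ v' in ℝ^d, K_f(v,v') = (2^{d−1}/|v'−v|) ∫_{{w : w·(v'−v)=0}} f(v+w) r_w^{γ−d+2} b(θ_w) dH^{d−1}(w), where r_w = (|v'−v|² + |w|²)^{1/2} and θ_w ∈ [0,π] is determined by cos(θ_w/2) = |w|/r_w. Then there exist constants C₁, C₂ > 0, depending only on d, γ, ν, c₁, c₂, such that for every measurable f : ℝ^d → [0,∞] and all v ≠ v': C₁ · J ≤ K_f(v,v') ≤ C₂ · J, where J = (∫_{{w : w·(v'−v)=0}} f(v+w) |w|^{1+γ+ν}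 dH^{d−1}(w)) · |v'−v|^{−d−ν}. -/
/-!
Write `t = ‖v' - v‖`, `s = ‖w‖` and `r = √(t² + s²)`. Then `sin θ_w = 2ts/r²` and
`cos θ_w = (s² - t²)/r²`, so the two regimes of `b` are `s ≥ t` and `s < t`. Inserting the bound
on `b`, the integrand of `K_f` becomes `t^(-d-ν) s^(1+γ+ν)` times a power of `2` and the
`(d + γ + 2ν)`-th power of `r/s ∈ [1, √2]` (resp. `t/r ∈ [1/√2, 1]`). So the two integrands are
pointwise comparable for `w ≠ 0`, and `{0}` is `H^(d-1)`-null because `d ≥ 2`.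
-/

open MeasureTheory
open scoped ENNReal InnerProductSpace

noncomputable section

open Real

/-- The angle `θ_w` for `t = ‖v' - v‖` and `s = ‖w‖`. -/
def deflectionAngle (t s : ℝ) : ℝ :=
  2 * arccos (s / √(t ^ 2 + s ^ 2))

section DeflectionAngle

variable {t s : ℝ}

lemma div_sqrt_sq_add_sq_lt_one (ht : 0 < t) : s / √(t ^ 2 + s ^ 2) < 1 := by
  rw [div_lt_one (by positivity)]
  exact (le_abs_self s).trans_lt (lt_sqrt_of_sq_lt (by rw [sq_abs]; linarith [pow_pos ht 2]))

lemma cos_deflectionAngle (ht : 0 < t) (hs : 0 ≤ s) :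
    cos (deflectionAngle t s) = (s ^ 2 - t ^ 2) / (t ^ 2 + s ^ 2) := by
  have hr2 := sq_sqrt (by positivity : 0 ≤ t ^ 2 + s ^ 2)
  rw [deflectionAngle, cos_two_mul, cos_arccos (by linarith [div_nonneg hs (sqrt_nonneg (t ^ 2 + s ^ 2))])
    (div_sqrt_sq_add_sq_lt_one ht).le, div_pow, hr2]
  field_simp
  ring

lemma sin_deflectionAngle (ht : 0 < t) (hs : 0 ≤ s) :
    sin (deflectionAngle t s) = 2 * t * s / (t ^ 2 + s ^ 2) := by
  have hr2 := sq_sqrt (by positivity : 0 ≤ t ^ 2 + s ^ 2)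
  have hr : 0 < √(t ^ 2 + s ^ 2) := by positivity
  rw [deflectionAngle, sin_two_mul, sin_arccos, cos_arccos (by linarith [div_nonneg hs hr.le])
    (div_sqrt_sq_add_sq_lt_one ht).le, div_pow, hr2, one_sub_div (by positivity),
    add_sub_cancel_right, sqrt_div' _ (by positivity), sqrt_sq ht.le]
  field_simp
  rw [hr2]

lemma deflectionAngle_mem_Ioo (ht : 0 < t) (hs : 0 < s) : deflectionAngle t s ∈ Set.Ioo 0 π := by
  have h0 : 0 < s / √(t ^ 2 + s ^ 2) := by positivity
  constructor
  · have := arccos_pos.mpr (div_sqrt_sq_add_sq_lt_one (s := s) ht)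
    rw [deflectionAngle]; linarith
  · have := arccos_lt_pi_div_two.mpr h0
    rw [deflectionAngle]; linarith

end DeflectionAngle

lemma le_sqrt_sq_add_sq {a b : ℝ} : b ≤ √(a ^ 2 + b ^ 2) :=
  le_sqrt_of_sq_le (by nlinarith [sq_nonneg a])

lemma sqrt_sq_add_sq_le {a b : ℝ} (ha : 0 ≤ a) (hab : a ≤ b) : √(a ^ 2 + b ^ 2) ≤ √2 * b := by
  calc √(a ^ 2 + b ^ 2) ≤ √(2 * b ^ 2) := sqrt_le_sqrt (by nlinarith)
    _ = √2 * b := by rw [sqrt_mul zero_le_two, sqrt_sq (ha.trans hab)]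

lemma two_pow_natSub_one_eq_exp {d : ℕ} (hd : 1 ≤ d) :
    (2 : ℝ) ^ (d - 1) = exp (log 2 * ((d : ℝ) - 1)) := by
  rw [← rpow_natCast, rpow_def_of_pos two_pos, Nat.cast_sub hd, Nat.cast_one]

lemma log_two_mul_mul_div_sq {t s r : ℝ} (ht : 0 < t) (hs : 0 < s) (hr : 0 < r) :
    log (2 * t * s / r ^ 2) = log 2 + log t + log s - 2 * log r := by
  rw [log_div (by positivity) (by positivity), log_mul (by positivity) hs.ne',
    log_mul two_ne_zero ht.ne', log_pow]
  push_cast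
  ring

section Profiles

variable {d : ℕ} {γ ν t s : ℝ}

lemma profile_eq_of_sin_pow_neg (hd : 1 ≤ d) (ht : 0 < t) (hs : 0 < s) :
    (2 : ℝ) ^ (d - 1) / t * (√(t ^ 2 + s ^ 2) ^ (γ - d + 2) *
        (2 * t * s / (t ^ 2 + s ^ 2)) ^ (-(d : ℝ) + 1 - ν))
      = 2 ^ (-ν) * (√(t ^ 2 + s ^ 2) / s) ^ ((d : ℝ) + γ + 2 * ν) *
        (t ^ (-(d : ℝ) - ν) * s ^ (1 + γ + ν)) := by
  have hr2 := sq_sqrt (by positivity : 0 ≤ t ^ 2 + s ^ 2)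
  set r := √(t ^ 2 + s ^ 2)
  have hr : 0 < r := by positivity
  rw [← hr2, two_pow_natSub_one_eq_exp hd, rpow_def_of_pos hr, rpow_def_of_pos (by positivity),
    log_two_mul_mul_div_sq ht hs hr, rpow_def_of_pos two_pos, rpow_def_of_pos (div_pos hr hs),
    log_div hr.ne' hs.ne', rpow_def_of_pos hs, rpow_def_of_pos ht, ← exp_log ht]
  -- both sides are now exponentials of linear forms in `log 2`, `log t`, `log s`, `log r`
  simp only [← exp_add, ← exp_sub, log_exp]
  congr 1
  ring

lemma profile_eq_of_sin_pow_pos (hd : 1 ≤ d) (ht : 0 < t) (hs : 0 < s) :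
    (2 : ℝ) ^ (d - 1) / t * (√(t ^ 2 + s ^ 2) ^ (γ - d + 2) *
        (2 * t * s / (t ^ 2 + s ^ 2)) ^ (1 + γ + ν))
      = 2 ^ ((d : ℝ) + γ + ν) * (t / √(t ^ 2 + s ^ 2)) ^ ((d : ℝ) + γ + 2 * ν) *
        (t ^ (-(d : ℝ) - ν) * s ^ (1 + γ + ν)) := by
  have hr2 := sq_sqrt (by positivity : 0 ≤ t ^ 2 + s ^ 2)
  set r := √(t ^ 2 + s ^ 2)
  have hr : 0 < r := by positivity
  rw [← hr2, two_pow_natSub_one_eq_exp hd, rpow_def_of_pos hr, rpow_def_of_pos (by positivity),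
    log_two_mul_mul_div_sq ht hs hr, rpow_def_of_pos two_pos, rpow_def_of_pos (div_pos ht hr),
    log_div ht.ne' hr.ne', rpow_def_of_pos hs, rpow_def_of_pos ht, ← exp_log ht]
  simp only [← exp_add, ← exp_sub, log_exp]
  congr 1
  ring

end Profiles

/-- The integrand of `K_f(v, v')` without `f(v + w)`, as a function of `t = ‖v' - v‖` and
`s = ‖w‖`. -/
def carlemanWeight (d : ℕ) (γ : ℝ) (b : ℝ → ℝ) (t s : ℝ) : ℝ :=
  2 ^ (d - 1) / t * (√(t ^ 2 + s ^ 2) ^ (γ - d + 2) * b (deflectionAngle t s))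

section CarlemanWeight

variable {d : ℕ} {γ ν c₁ c₂ t s : ℝ} {b : ℝ → ℝ}

lemma carlemanWeight_bounds_of_le (hd : 1 ≤ d) (hm : 0 ≤ (d : ℝ) + γ + 2 * ν) (hc₁ : 0 ≤ c₁)
    (hc₂ : 0 ≤ c₂) (ht : 0 < t) (hts : t ≤ s)
    (hb : c₁ * sin (deflectionAngle t s) ^ (-(d : ℝ) + 1 - ν) ≤ b (deflectionAngle t s) ∧
      b (deflectionAngle t s) ≤ c₂ * sin (deflectionAngle t s) ^ (-(d : ℝ) + 1 - ν)) :
    c₁ * 2 ^ (-ν) * (t ^ (-(d : ℝ) - ν) * s ^ (1 + γ + ν)) ≤ carlemanWeight d γ b t s ∧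
      carlemanWeight d γ b t s ≤
        c₂ * (2 ^ (-ν) * √2 ^ ((d : ℝ) + γ + 2 * ν)) * (t ^ (-(d : ℝ) - ν) * s ^ (1 + γ + ν)) := by
  have hs : 0 < s := ht.trans_le hts
  rw [sin_deflectionAngle ht hs.le] at hb
  have hratio_ge : 1 ≤ √(t ^ 2 + s ^ 2) / s := (one_le_div hs).2 le_sqrt_sq_add_sq
  have hratio_le : √(t ^ 2 + s ^ 2) / s ≤ √2 :=
    (div_le_iff₀ hs).2 (sqrt_sq_add_sq_le ht.le hts)
  have hprofile := profile_eq_of_sin_pow_neg (γ := γ) (ν := ν) hd ht hs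
  constructor
  · calc c₁ * 2 ^ (-ν) * (t ^ (-(d : ℝ) - ν) * s ^ (1 + γ + ν))
        ≤ c₁ * (2 ^ (-ν) * (√(t ^ 2 + s ^ 2) / s) ^ ((d : ℝ) + γ + 2 * ν) *
            (t ^ (-(d : ℝ) - ν) * s ^ (1 + γ + ν))) := by
          rw [mul_assoc]
          gcongr
          exact le_mul_of_one_le_right (by positivity) (one_le_rpow hratio_ge hm)
      _ = 2 ^ (d - 1) / t * (√(t ^ 2 + s ^ 2) ^ (γ - d + 2) *
            (c₁ * (2 * t * s / (t ^ 2 + s ^ 2)) ^ (-(d : ℝ) + 1 - ν))) := by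
          rw [← hprofile]; ring
      _ ≤ carlemanWeight d γ b t s := by
          unfold carlemanWeight; gcongr; exact hb.1
  · calc carlemanWeight d γ b t s
        ≤ 2 ^ (d - 1) / t * (√(t ^ 2 + s ^ 2) ^ (γ - d + 2) *
            (c₂ * (2 * t * s / (t ^ 2 + s ^ 2)) ^ (-(d : ℝ) + 1 - ν))) := by
          unfold carlemanWeight; gcongr; exact hb.2
      _ = c₂ * (2 ^ (-ν) * (√(t ^ 2 + s ^ 2) / s) ^ ((d : ℝ) + γ + 2 * ν) *
            (t ^ (-(d : ℝ) - ν) * s ^ (1 + γ + ν))) := by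
          rw [← hprofile]; ring
      _ ≤ c₂ * (2 ^ (-ν) * √2 ^ ((d : ℝ) + γ + 2 * ν)) * (t ^ (-(d : ℝ) - ν) * s ^ (1 + γ + ν)) := by
          rw [mul_assoc c₂]
          gcongr

lemma carlemanWeight_bounds_of_lt (hd : 1 ≤ d) (hm : 0 ≤ (d : ℝ) + γ + 2 * ν) (hc₁ : 0 ≤ c₁)
    (hc₂ : 0 ≤ c₂) (hs : 0 < s) (hst : s < t)
    (hb : c₁ * sin (deflectionAngle t s) ^ (1 + γ + ν) ≤ b (deflectionAngle t s) ∧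
      b (deflectionAngle t s) ≤ c₂ * sin (deflectionAngle t s) ^ (1 + γ + ν)) :
    c₁ * (2 ^ ((d : ℝ) + γ + ν) * (√2)⁻¹ ^ ((d : ℝ) + γ + 2 * ν)) *
        (t ^ (-(d : ℝ) - ν) * s ^ (1 + γ + ν)) ≤ carlemanWeight d γ b t s ∧
      carlemanWeight d γ b t s ≤
        c₂ * 2 ^ ((d : ℝ) + γ + ν) * (t ^ (-(d : ℝ) - ν) * s ^ (1 + γ + ν)) := by
  have ht : 0 < t := hs.trans hst
  rw [sin_deflectionAngle ht hs.le] at hb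
  have hr : 0 < √(t ^ 2 + s ^ 2) := by positivity
  have hratio_ge : (√2)⁻¹ ≤ t / √(t ^ 2 + s ^ 2) := by
    rw [le_div_iff₀ hr, inv_mul_le_iff₀ (by positivity), add_comm]
    exact sqrt_sq_add_sq_le hs.le hst.le
  have hratio_le : t / √(t ^ 2 + s ^ 2) ≤ 1 := by
    rw [div_le_one hr, add_comm]
    exact le_sqrt_sq_add_sq
  have hprofile := profile_eq_of_sin_pow_pos (γ := γ) (ν := ν) hd ht hs
  constructor
  · calc c₁ * (2 ^ ((d : ℝ) + γ + ν) * (√2)⁻¹ ^ ((d : ℝ) + γ + 2 * ν)) *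
          (t ^ (-(d : ℝ) - ν) * s ^ (1 + γ + ν))
        ≤ c₁ * (2 ^ ((d : ℝ) + γ + ν) * (t / √(t ^ 2 + s ^ 2)) ^ ((d : ℝ) + γ + 2 * ν) *
            (t ^ (-(d : ℝ) - ν) * s ^ (1 + γ + ν))) := by
          rw [mul_assoc c₁]
          gcongr
      _ = 2 ^ (d - 1) / t * (√(t ^ 2 + s ^ 2) ^ (γ - d + 2) *
            (c₁ * (2 * t * s / (t ^ 2 + s ^ 2)) ^ (1 + γ + ν))) := by
          rw [← hprofile]; ring
      _ ≤ carlemanWeight d γ b t s := by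
          unfold carlemanWeight; gcongr; exact hb.1
  · calc carlemanWeight d γ b t s
        ≤ 2 ^ (d - 1) / t * (√(t ^ 2 + s ^ 2) ^ (γ - d + 2) *
            (c₂ * (2 * t * s / (t ^ 2 + s ^ 2)) ^ (1 + γ + ν))) := by
          unfold carlemanWeight; gcongr; exact hb.2
      _ = c₂ * (2 ^ ((d : ℝ) + γ + ν) * (t / √(t ^ 2 + s ^ 2)) ^ ((d : ℝ) + γ + 2 * ν) *
            (t ^ (-(d : ℝ) - ν) * s ^ (1 + γ + ν))) := by
          rw [← hprofile]; ring
      _ ≤ c₂ * 2 ^ ((d : ℝ) + γ + ν) * (t ^ (-(d : ℝ) - ν) * s ^ (1 + γ + ν)) := by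
          rw [mul_assoc c₂]
          gcongr
          exact mul_le_of_le_one_right (by positivity) (rpow_le_one (by positivity) hratio_le hm)


lemma exists_carlemanWeight_comparable (hd : 1 ≤ d) (hm : 0 ≤ (d : ℝ) + γ + 2 * ν)
    (hc₁ : 0 < c₁) (hc₂ : 0 < c₂)
    (hb_pos : ∀ θ : ℝ, 0 < θ → θ < π → 0 ≤ cos θ →
      c₁ * sin θ ^ (-(d : ℝ) + 1 - ν) ≤ b θ ∧ b θ ≤ c₂ * sin θ ^ (-(d : ℝ) + 1 - ν))
    (hb_neg : ∀ θ : ℝ, 0 < θ → θ < π → cos θ < 0 →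
      c₁ * sin θ ^ (1 + γ + ν) ≤ b θ ∧ b θ ≤ c₂ * sin θ ^ (1 + γ + ν)) :
    ∃ C₁ C₂ : ℝ, 0 < C₁ ∧ 0 < C₂ ∧ ∀ t s : ℝ, 0 < t → 0 < s →
      C₁ * (t ^ (-(d : ℝ) - ν) * s ^ (1 + γ + ν)) ≤ carlemanWeight d γ b t s ∧
        carlemanWeight d γ b t s ≤ C₂ * (t ^ (-(d : ℝ) - ν) * s ^ (1 + γ + ν)) := by
  set K₁ : ℝ := 2 ^ (-ν)
  set K₁' : ℝ := 2 ^ (-ν) * √2 ^ ((d : ℝ) + γ + 2 * ν)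
  set K₂ : ℝ := 2 ^ ((d : ℝ) + γ + ν) * (√2)⁻¹ ^ ((d : ℝ) + γ + 2 * ν)
  set K₂' : ℝ := 2 ^ ((d : ℝ) + γ + ν)
  refine ⟨c₁ * min K₁ K₂, c₂ * max K₁' K₂', by positivity, by positivity, fun t s ht hs => ?_⟩
  obtain ⟨hθ₀, hθπ⟩ := deflectionAngle_mem_Ioo ht hs
  rcases le_or_gt t s with hts | hst
  · have hcos : 0 ≤ cos (deflectionAngle t s) := by
      rw [cos_deflectionAngle ht hs.le]
      exact div_nonneg (by nlinarith) (by positivity)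
    obtain ⟨hlower, hupper⟩ :=
      carlemanWeight_bounds_of_le hd hm hc₁.le hc₂.le ht hts (hb_pos _ hθ₀ hθπ hcos)
    exact ⟨le_trans (by gcongr; exact min_le_left _ _) hlower,
      hupper.trans (by gcongr; exact le_max_left _ _)⟩
  · have hcos : cos (deflectionAngle t s) < 0 := by
      rw [cos_deflectionAngle ht hs.le]
      exact div_neg_of_neg_of_pos (by nlinarith) (by positivity)
    obtain ⟨hlower, hupper⟩ :=
      carlemanWeight_bounds_of_lt hd hm hc₁.le hc₂.le hs hst (hb_neg _ hθ₀ hθπ hcos)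
    exact ⟨le_trans (by gcongr; exact min_le_right _ _) hlower,
      hupper.trans (by gcongr; exact le_max_right _ _)⟩

end CarlemanWeight

lemma ofReal_mul_lintegral_le_ofReal_mul_lintegral {α : Type*} [MeasurableSpace α]
    {μ : Measure α} {f : α → ℝ≥0∞} {g h : α → ℝ} {a c : ℝ} (ha : 0 ≤ a) (hc : 0 ≤ c)
    (hgh : ∀ᵐ x ∂μ, a * g x ≤ c * h x) :
    ENNReal.ofReal a * ∫⁻ x, f x * ENNReal.ofReal (g x) ∂μ ≤
      ENNReal.ofReal c * ∫⁻ x, f x * ENNReal.ofReal (h x) ∂μ := by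
  rw [← lintegral_const_mul' _ _ ENNReal.ofReal_ne_top,
    ← lintegral_const_mul' _ _ ENNReal.ofReal_ne_top]
  refine lintegral_mono_ae (hgh.mono fun x hx => ?_)
  calc ENNReal.ofReal a * (f x * ENNReal.ofReal (g x)) = f x * ENNReal.ofReal (a * g x) := by
        rw [ENNReal.ofReal_mul ha]; ring
    _ ≤ f x * ENNReal.ofReal (c * h x) := by gcongr
    _ = ENNReal.ofReal c * (f x * ENNReal.ofReal (h x)) := by
        rw [ENNReal.ofReal_mul hc]; ring

theorem Kf_equivalence_general
    (d : ℕ) (hd : 2 ≤ d) (γ ν : ℝ) (hγ : 0 < γ ∧ γ ≤ 1) (hν : 0 < ν ∧ ν < 2)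
    (b : ℝ → ℝ)
    (c₁ c₂ : ℝ) (hc₁ : 0 < c₁) (hc₂ : 0 < c₂)
    (hb_pos : ∀ θ : ℝ, 0 < θ → θ < Real.pi → 0 ≤ Real.cos θ →
      c₁ * Real.sin θ ^ (-(d : ℝ) + 1 - ν) ≤ b θ ∧
      b θ ≤ c₂ * Real.sin θ ^ (-(d : ℝ) + 1 - ν))
    (hb_neg : ∀ θ : ℝ, 0 < θ → θ < Real.pi → Real.cos θ < 0 →
      c₁ * Real.sin θ ^ (1 + γ + ν) ≤ b θ ∧
      b θ ≤ c₂ * Real.sin θ ^ (1 + γ + ν)) :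
    ∃ C₁ C₂ : ℝ, 0 < C₁ ∧ 0 < C₂ ∧
      ∀ (f : EuclideanSpace ℝ (Fin d) → ℝ≥0∞), Measurable f →
      ∀ (v v' : EuclideanSpace ℝ (Fin d)), v ≠ v' →
        (ENNReal.ofReal C₁ *
          ((∫⁻ w in {w : EuclideanSpace ℝ (Fin d) | ⟪w, v' - v⟫_ℝ = 0},
              f (v + w) * ENNReal.ofReal (‖w‖ ^ (1 + γ + ν)) ∂(μH[(d : ℝ) - 1])) *
            ENNReal.ofReal (‖v' - v‖ ^ (-(d : ℝ) - ν)))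
        ≤ ENNReal.ofReal ((2:ℝ) ^ (d - 1) / ‖v' - v‖) *
            ∫⁻ w in {w : EuclideanSpace ℝ (Fin d) | ⟪w, v' - v⟫_ℝ = 0},
              f (v + w) *
              ENNReal.ofReal
                (Real.sqrt (‖v' - v‖ ^ 2 + ‖w‖ ^ 2) ^ (γ - (d : ℝ) + 2) *
                 b (2 * Real.arccos (‖w‖ / Real.sqrt (‖v' - v‖ ^ 2 + ‖w‖ ^ 2))))
              ∂(μH[(d : ℝ) - 1]))
        ∧
        (ENNReal.ofReal ((2:ℝ) ^ (d - 1) / ‖v' - v‖) *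
            ∫⁻ w in {w : EuclideanSpace ℝ (Fin d) | ⟪w, v' - v⟫_ℝ = 0},
              f (v + w) *
              ENNReal.ofReal
                (Real.sqrt (‖v' - v‖ ^ 2 + ‖w‖ ^ 2) ^ (γ - (d : ℝ) + 2) *
                 b (2 * Real.arccos (‖w‖ / Real.sqrt (‖v' - v‖ ^ 2 + ‖w‖ ^ 2))))
              ∂(μH[(d : ℝ) - 1])
        ≤ ENNReal.ofReal C₂ *
          ((∫⁻ w in {w : EuclideanSpace ℝ (Fin d) | ⟪w, v' - v⟫_ℝ = 0},
              f (v + w) * ENNReal.ofReal (‖w‖ ^ (1 + γ + ν)) ∂(μH[(d : ℝ) - 1])) *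
            ENNReal.ofReal (‖v' - v‖ ^ (-(d : ℝ) - ν)))) := by
  obtain ⟨C₁, C₂, hC₁, hC₂, hcomparable⟩ := exists_carlemanWeight_comparable (d := d) (γ := γ)
    (by omega) (by positivity [hγ.1, hν.1]) hc₁ hc₂ hb_pos hb_neg
  refine ⟨C₁, C₂, hC₁, hC₂, fun f _ v v' hvv' => ?_⟩
  set t := ‖v' - v‖
  have ht : 0 < t := norm_pos_iff.2 (sub_ne_zero.2 hvv'.symm)
  -- `w = 0` is where `b` is evaluated at `θ = π`, outside the range of the bounds on `b`.
  have hw : ∀ᵐ w ∂(μH[(d : ℝ) - 1]).restrict {w : EuclideanSpace ℝ (Fin d) | ⟪w, v' - v⟫_ℝ = 0},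
      0 < ‖w‖ := by
    have : NullSingletonClass (μH[(d : ℝ) - 1] : Measure (EuclideanSpace ℝ (Fin d))) :=
      Measure.nullSingletonClass_hausdorff _ (sub_pos.2 (Nat.one_lt_cast.2 hd))
    exact ae_restrict_of_ae ((Measure.ae_ne _ 0).mono fun w => norm_pos_iff.2)
  constructor
  · rw [mul_comm (lintegral _ _), ← mul_assoc, ← ENNReal.ofReal_mul hC₁.le]
    refine ofReal_mul_lintegral_le_ofReal_mul_lintegral (by positivity) (by positivity)
      (hw.mono fun w hw => ?_)
    rw [mul_assoc]
    exact (hcomparable t ‖w‖ ht hw).1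
  · rw [mul_comm (lintegral _ _), ← mul_assoc, ← ENNReal.ofReal_mul hC₂.le]
    refine ofReal_mul_lintegral_le_ofReal_mul_lintegral (by positivity) (by positivity)
      (hw.mono fun w hw => ?_)
    rw [mul_assoc]
    exact (hcomparable t ‖w‖ ht hw).2

/-- Pointwise equivalence of the Carleman kernel `K_f` with
`(∫_{w ⊥ v'-v} f(v+w) |w|^{1+γ+ν} dw) |v'-v|^{-d-ν}`. -/
theorem Kf_equivalence
    (d : ℕ) (hd : 2 ≤ d) (γ ν : ℝ) (hγ : 0 < γ ∧ γ ≤ 1) (hν : 0 < ν ∧ ν < 2)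
    (b : ℝ → ℝ) (hb_nonneg : ∀ θ, 0 ≤ b θ)
    (c₁ c₂ : ℝ) (hc₁ : 0 < c₁) (hc₂ : 0 < c₂)
    (hb_pos : ∀ θ : ℝ, 0 < θ → θ < Real.pi → 0 ≤ Real.cos θ →
      c₁ * Real.sin θ ^ (-(d : ℝ) + 1 - ν) ≤ b θ ∧
      b θ ≤ c₂ * Real.sin θ ^ (-(d : ℝ) + 1 - ν))
    (hb_neg : ∀ θ : ℝ, 0 < θ → θ < Real.pi → Real.cos θ < 0 →
      c₁ * Real.sin θ ^ (1 + γ + ν) ≤ b θ ∧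
      b θ ≤ c₂ * Real.sin θ ^ (1 + γ + ν)) :
    ∃ C₁ C₂ : ℝ, 0 < C₁ ∧ 0 < C₂ ∧
      ∀ (f : EuclideanSpace ℝ (Fin d) → ℝ≥0∞), Measurable f →
      ∀ (v v' : EuclideanSpace ℝ (Fin d)), v ≠ v' →
        (ENNReal.ofReal C₁ *
          ((∫⁻ w in {w : EuclideanSpace ℝ (Fin d) | ⟪w, v' - v⟫_ℝ = 0},
              f (v + w) * ENNReal.ofReal (‖w‖ ^ (1 + γ + ν)) ∂(μH[(d : ℝ) - 1])) *
            ENNReal.ofReal (‖v' - v‖ ^ (-(d : ℝ) - ν)))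
        ≤ ENNReal.ofReal ((2:ℝ) ^ (d - 1) / ‖v' - v‖) *
            ∫⁻ w in {w : EuclideanSpace ℝ (Fin d) | ⟪w, v' - v⟫_ℝ = 0},
              f (v + w) *
              ENNReal.ofReal
                (Real.sqrt (‖v' - v‖ ^ 2 + ‖w‖ ^ 2) ^ (γ - (d : ℝ) + 2) *
                 b (2 * Real.arccos (‖w‖ / Real.sqrt (‖v' - v‖ ^ 2 + ‖w‖ ^ 2))))
              ∂(μH[(d : ℝ) - 1]))
        ∧
        (ENNReal.ofReal ((2:ℝ) ^ (d - 1) / ‖v' - v‖) *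
            ∫⁻ w in {w : EuclideanSpace ℝ (Fin d) | ⟪w, v' - v⟫_ℝ = 0},
              f (v + w) *
              ENNReal.ofReal
                (Real.sqrt (‖v' - v‖ ^ 2 + ‖w‖ ^ 2) ^ (γ - (d : ℝ) + 2) *
                 b (2 * Real.arccos (‖w‖ / Real.sqrt (‖v' - v‖ ^ 2 + ‖w‖ ^ 2))))
              ∂(μH[(d : ℝ) - 1])
        ≤ ENNReal.ofReal C₂ *
          ((∫⁻ w in {w : EuclideanSpace ℝ (Fin d) | ⟪w, v' - v⟫_ℝ = 0},
              f (v + w) * ENNReal.ofReal (‖w‖ ^ (1 + γ + ν)) ∂(μH[(d : ℝ) - 1])) *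
            ENNReal.ofReal (‖v' - v‖ ^ (-(d : ℝ) - ν)))) :=
  Kf_equivalence_general d hd γ ν hγ hν b c₁ c₂ hc₁ hc₂ hb_pos hb_neg
end
end

section
/- Let d ≥ 2 and ν > 0. Let m̃ > 0 and let g : ℝ^d → ℝ be a measurable function with 0 ≤ g(v') ≤ m̃ for all v' ∈ ℝ^d. Let ṽ ∈ ℝ^d, let A ⊆ S^{d−1} satisfy H^{d−1}(A) ≥ μ for some μ > 0, and let 𝒞 = {v' ∈ ℝ^d : v' ≠ ṽ and (v'−ṽ)/|v'−ṽ| ∈ A} be the associated cone centered at ṽ. Assume 0 < ∫_{𝒞} g(v') dv' < ∞. Then there exists a constant c > 0, depending only on d and ν, such that ∫_{𝒞} (m̃ − g(v')) |ṽ − v'|^{−d−ν} dv' ≥ c · m̃^{1+ν/d} · μ^{1+ν/d} / (∫_{𝒞} g(v') dv')^{ν/d}. -/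
/-!
Cut the cone `C` by the annulus `ρ ≤ |v - ṽ| ≤ 2ρ`. Every sphere `|v - ṽ| = τ` of the annulus
meets `C` in a copy of `A` scaled by `τ`, and the radial projection onto `S^{d-1}` is
`2/ρ`-Lipschitz there, so an Eilenberg-type slicing inequality gives the annular sector
`d`-dimensional Hausdorff measure, hence volume, at least of order `μ ρ^d`. Choosing `ρ` so that
`m̃` times this volume is `2 ∫_C g`, at least half of the mass `m̃ · vol` is not used by `g`:
the sector carries `∫ (m̃ - g) ≥ ∫_C g`, and on it the kernel is at least `(2ρ)^{-d-ν}`.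
-/

open MeasureTheory
open scoped ENNReal

noncomputable section

open Set Metric
open scoped NNReal

theorem LipschitzOnWith.ediam_image_le {α β : Type*} [PseudoEMetricSpace α]
    [PseudoEMetricSpace β] {K : ℝ≥0} {f : α → β} {s : Set α} (hf : LipschitzOnWith K f s) :
    ediam (f '' s) ≤ K * ediam s :=
  ediam_image_le_iff.2 fun _ hx _ hy =>
    (hf hx hy).trans (mul_right_mono (edist_le_ediam_of_mem hx hy))

section Slicing

variable {X Y : Type*} [EMetricSpace X] [EMetricSpace Y]

/-- The size-`r` approximation `ℋ^s_r(A)` of the Hausdorff measure `μH[s] A`. -/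
def hausdorffApprox (s : ℝ) (r : ℝ≥0∞) (A : Set Y) : ℝ≥0∞ :=
  ⨅ (t : ℕ → Set Y) (_ : A ⊆ ⋃ n, t n) (_ : ∀ n, ediam (t n) ≤ r),
    ∑' n, ⨆ _ : (t n).Nonempty, ediam (t n) ^ s

theorem hausdorffMeasure_eq_iSup_hausdorffApprox [MeasurableSpace Y] [BorelSpace Y] (s : ℝ)
    (A : Set Y) : μH[s] A = ⨆ (r : ℝ≥0∞) (_ : 0 < r), hausdorffApprox s r A :=
  Measure.hausdorffMeasure_apply s A

theorem hausdorffApprox_le_tsum_indicator {s : ℝ} (hs : 0 ≤ s) {r : ℝ≥0∞} {K : ℝ≥0}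
    {p : X → Y} {q : X → ℝ} {S : Set X} {A : Set Y} {τ : ℝ} {t : ℕ → Set X}
    (hp : LipschitzOnWith K p S) (hA : A ⊆ p '' (S ∩ q ⁻¹' {τ})) (hSt : S ⊆ ⋃ n, t n)
    (htr : ∀ n, K * ediam (t n) ≤ r) :
    hausdorffApprox s r A ≤ ∑' n, (toMeasurable volume (q '' (t n ∩ S))).indicator
      (fun _ => ((K : ℝ≥0∞) * ediam (t n)) ^ s) τ := by
  set u : ℕ → Set Y := fun n => p '' (t n ∩ S ∩ q ⁻¹' {τ})
  have hAu : A ⊆ ⋃ n, u n := by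
    rintro _ hx
    obtain ⟨x, ⟨hxS, hxτ⟩, rfl⟩ := hA hx
    obtain ⟨n, hxt⟩ := mem_iUnion.1 (hSt hxS)
    exact mem_iUnion.2 ⟨n, x, ⟨⟨hxt, hxS⟩, hxτ⟩, rfl⟩
  have hu : ∀ n, ediam (u n) ≤ K * ediam (t n) := fun n =>
    (hp.mono fun _ hx => hx.1.2).ediam_image_le.trans
      (mul_right_mono (ediam_mono fun _ hx => hx.1.1))
  refine iInf₂_le_of_le u hAu (iInf_le_of_le (fun n => (hu n).trans (htr n)) ?_)
  refine ENNReal.tsum_le_tsum fun n => iSup_le fun ⟨_, x, ⟨hxtS, hxτ⟩, _⟩ => ?_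
  have hτ : τ ∈ q '' (t n ∩ S) := ⟨x, hxtS, hxτ⟩
  rw [indicator_of_mem (subset_toMeasurable _ _ hτ)]
  exact ENNReal.rpow_le_rpow (hu n) hs

theorem volume_toMeasurable_image_inter_le_ediam {q : X → ℝ} {S t : Set X}
    (hq : LipschitzOnWith 1 q S) :
    volume (toMeasurable volume (q '' (t ∩ S))) ≤ ediam t :=
  calc volume (toMeasurable volume (q '' (t ∩ S))) = volume (q '' (t ∩ S)) :=
        measure_toMeasurable _
    _ ≤ ediam (q '' (t ∩ S)) := Real.volume_le_diam _
    _ ≤ ediam (t ∩ S) := by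
        simpa using (hq.mono inter_subset_right).ediam_image_le
    _ ≤ ediam t := ediam_mono inter_subset_left

theorem ENNReal.mul_rpow_mul_le_rpow_mul_rpow_add_one {s : ℝ} (hs : 0 ≤ s) (K : ℝ≥0∞)
    {D V : ℝ≥0∞} (hVD : V ≤ D) : (K * D) ^ s * V ≤ K ^ s * D ^ (s + 1) := by
  rw [ENNReal.mul_rpow_of_nonneg _ _ hs, ENNReal.rpow_add_of_nonneg _ _ hs zero_le_one,
    ENNReal.rpow_one, mul_assoc]
  gcongr

/-- An Eilenberg-type slicing inequality. -/
theorem volume_mul_hausdorffMeasure_le_of_slices [MeasurableSpace X] [BorelSpace X]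
    [MeasurableSpace Y] [BorelSpace Y] {s : ℝ} (hs : 0 ≤ s) {K : ℝ≥0} (hK : K ≠ 0)
    {p : X → Y} {q : X → ℝ} {S : Set X} {A : Set Y} {T : Set ℝ}
    (hp : LipschitzOnWith K p S) (hq : LipschitzOnWith 1 q S)
    (hA : ∀ τ ∈ T, A ⊆ p '' (S ∩ q ⁻¹' {τ})) :
    volume T * μH[s] A ≤ (K : ℝ≥0∞) ^ s * μH[s + 1] S := by
  have hK0 : (K : ℝ≥0∞) ^ s ≠ 0 := by simp [hK]
  have hKtop : (K : ℝ≥0∞) ^ s ≠ ∞ := by simp [hs]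
  simp only [hausdorffMeasure_eq_iSup_hausdorffApprox, ENNReal.mul_iSup]
  refine iSup₂_le fun r hr => le_iSup₂_of_le (r / (K + 1)) (by simp [hr.ne']) ?_
  simp only [hausdorffApprox, ENNReal.mul_iInf_of_ne hK0 hKtop]
  refine le_iInf₂ fun t hSt => le_iInf fun htr => ?_
  set J : ℕ → Set ℝ := fun n => toMeasurable volume (q '' (t n ∩ S))
  have hKt : ∀ n, K * ediam (t n) ≤ r := fun n =>
    calc K * ediam (t n) ≤ (K + 1) * (r / (K + 1)) := by gcongr; exacts [le_self_add, htr n]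
      _ ≤ r := ENNReal.mul_div_le
  -- Integrate over `τ ∈ T` the covers `p '' (t n ∩ S ∩ q ⁻¹' {τ})` of `A`: since `q` is
  -- `1`-Lipschitz, the `n`-th one is nonempty only for `τ` in a set of measure `≤ ediam (t n)`.
  calc volume T * hausdorffApprox s r A
      = ∫⁻ _ in T, hausdorffApprox s r A := by rw [setLIntegral_const, mul_comm]
    _ ≤ ∫⁻ τ in T, ∑' n, (J n).indicator (fun _ => ((K : ℝ≥0∞) * ediam (t n)) ^ s) τ :=
        setLIntegral_mono
          (Measurable.tsum fun n => measurable_const.indicator (measurableSet_toMeasurable _ _))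
          fun τ hτ => hausdorffApprox_le_tsum_indicator hs hp (hA τ hτ) hSt hKt
    _ ≤ ∫⁻ τ, ∑' n, (J n).indicator (fun _ => ((K : ℝ≥0∞) * ediam (t n)) ^ s) τ :=
        setLIntegral_le_lintegral _ _
    _ = ∑' n, ((K : ℝ≥0∞) * ediam (t n)) ^ s * volume (J n) := by
        rw [lintegral_tsum fun n =>
          (measurable_const.indicator (measurableSet_toMeasurable _ _)).aemeasurable]
        simp only [J, lintegral_indicator_const (measurableSet_toMeasurable _ _)]
    _ ≤ ∑' n, (K : ℝ≥0∞) ^ s * ⨆ _ : (t n).Nonempty, ediam (t n) ^ (s + 1) := by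
        refine ENNReal.tsum_le_tsum fun n => ?_
        rcases (t n).eq_empty_or_nonempty with ht | ht
        · have : volume (J n) = 0 := by simp [J, ht]
          simp [this]
        · rw [iSup_pos ht]
          exact ENNReal.mul_rpow_mul_le_rpow_mul_rpow_add_one hs _
            (volume_toMeasurable_image_inter_le_ediam hq)
    _ = (K : ℝ≥0∞) ^ s * ∑' n, ⨆ _ : (t n).Nonempty, ediam (t n) ^ (s + 1) :=
        ENNReal.tsum_mul_left

end Slicing

def cone {E : Type*} [NormedAddCommGroup E] [NormedSpace ℝ E] (vt : E) (A : Set E) : Set E :=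
  {v | v ≠ vt ∧ ‖v - vt‖⁻¹ • (v - vt) ∈ A}

theorem lipschitzOnWith_inv_norm_smul_sub {E : Type*} [NormedAddCommGroup E] [NormedSpace ℝ E]
    {ρ : ℝ} (hρ : 0 < ρ) (c : E) :
    LipschitzOnWith (2 / ρ).toNNReal (fun v : E => ‖v - c‖⁻¹ • (v - c)) {v | ρ ≤ ‖v - c‖} := by
  refine LipschitzOnWith.of_dist_le_mul fun x (hx : ρ ≤ ‖x - c‖) y (hy : ρ ≤ ‖y - c‖) => ?_
  rw [← dist_sub_right x y c]
  generalize x - c = x at hx ⊢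
  generalize y - c = y at hy ⊢
  have hx0 : 0 < ‖x‖ := hρ.trans_le hx
  have hy0 : ‖y‖ ≠ 0 := (hρ.trans_le hy).ne'
  have hsplit : ‖x‖⁻¹ • x - ‖y‖⁻¹ • y = ‖x‖⁻¹ • ((x - y) + (‖y‖ - ‖x‖) • ‖y‖⁻¹ • y) := by
    have : ‖x‖⁻¹ * (‖y‖ - ‖x‖) * ‖y‖⁻¹ = ‖x‖⁻¹ - ‖y‖⁻¹ := by field_simp
    rw [smul_add, smul_smul, smul_smul, this, sub_smul, smul_sub]
    abel
  have hunit : ‖‖y‖⁻¹ • y‖ = 1 := norm_smul_inv_norm (norm_ne_zero_iff.1 hy0)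
  calc dist (‖x‖⁻¹ • x) (‖y‖⁻¹ • y)
      ≤ ‖x‖⁻¹ * (‖x - y‖ + |‖y‖ - ‖x‖| * 1) := by
        rw [dist_eq_norm, hsplit, norm_smul, Real.norm_of_nonneg (inv_nonneg.2 hx0.le), ← hunit,
          ← Real.norm_eq_abs, ← norm_smul]
        gcongr
        exact norm_add_le _ _
    _ ≤ ‖x‖⁻¹ * (2 * ‖x - y‖) := by
        gcongr
        rw [mul_one, two_mul, abs_sub_comm]
        gcongr
        exact abs_norm_sub_norm_le x y
    _ ≤ (2 / ρ).toNNReal * dist x y := by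
        rw [Real.coe_toNNReal _ (by positivity), dist_eq_norm, ← mul_assoc, inv_mul_eq_div,
          div_mul_eq_mul_div, mul_div_right_comm]
        gcongr

theorem hausdorffMeasure_le_ofReal_sqrt_pow_mul_volume {ι : Type*} [Fintype ι]
    (S : Set (EuclideanSpace ℝ ι)) :
    μH[Fintype.card ι] S ≤ ENNReal.ofReal (√(Fintype.card ι) ^ Fintype.card ι) * volume S := by
  have h := (PiLp.lipschitzWith_toLp 2 fun _ : ι => ℝ).hausdorffMeasure_image_le
    (Nat.cast_nonneg (Fintype.card ι)) (WithLp.toLp 2 ⁻¹' S)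
  rw [image_preimage_eq S (WithLp.toLp_surjective 2), hausdorffMeasure_pi_real,
    (PiLp.volume_preserving_toLp ι).measure_preimage_emb
      (MeasurableEquiv.toLp 2 (ι → ℝ)).measurableEmbedding] at h
  convert h using 2
  rw [ENNReal.rpow_natCast, ENNReal.ofReal_pow (Real.sqrt_nonneg _), one_div, ENNReal.toReal_inv,
    ENNReal.toReal_ofNat, ← one_div, ← NNReal.sqrt_eq_rpow, ← NNReal.coe_natCast,
    ← Real.coe_sqrt, ENNReal.ofReal_coe_nnreal]

theorem ofReal_mul_hausdorffMeasure_le_annulus_inter_cone {E : Type*} [NormedAddCommGroup E]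
    [NormedSpace ℝ E] [MeasurableSpace E] [BorelSpace E] {s : ℝ} (hs : 0 ≤ s) {A : Set E}
    (hA : A ⊆ sphere 0 1) (vt : E) {ρ : ℝ} (hρ : 0 < ρ) :
    ENNReal.ofReal ρ * μH[s] A ≤ ENNReal.ofReal (2 / ρ) ^ s *
      μH[s + 1] ({v | ‖v - vt‖ ∈ Icc ρ (2 * ρ)} ∩ cone vt A) := by
  have hq : LipschitzWith 1 fun v : E => ‖v - vt‖ := by
    simpa only [dist_eq_norm] using LipschitzWith.dist_left vt
  have hslices : ∀ τ ∈ Icc ρ (2 * ρ), A ⊆ (fun v => ‖v - vt‖⁻¹ • (v - vt)) ''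
      (({v | ‖v - vt‖ ∈ Icc ρ (2 * ρ)} ∩ cone vt A) ∩
        (fun v => ‖v - vt‖) ⁻¹' {τ}) := by
    intro τ hτ θ hθ
    have hτ0 : 0 < τ := hρ.trans_le hτ.1
    have hnorm : ‖vt + τ • θ - vt‖ = τ := by
      rw [add_sub_cancel_left, norm_smul, Real.norm_of_nonneg hτ0.le,
        mem_sphere_zero_iff_norm.1 (hA hθ), mul_one]
    have hunit : ‖vt + τ • θ - vt‖⁻¹ • (vt + τ • θ - vt) = θ := by
      rw [hnorm, add_sub_cancel_left, smul_smul, inv_mul_cancel₀ hτ0.ne', one_smul]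
    refine ⟨vt + τ • θ, ⟨⟨show _ ∈ Icc _ _ by rwa [hnorm], fun h => ?_,
      show _ ∈ A by rwa [hunit]⟩, hnorm⟩, hunit⟩
    rw [h, sub_self, norm_zero] at hnorm
    exact hτ0.ne hnorm
  have := volume_mul_hausdorffMeasure_le_of_slices hs (by simpa using hρ)
    ((lipschitzOnWith_inv_norm_smul_sub hρ vt).mono fun v hv => hv.1.1) hq.lipschitzOnWith
    hslices
  rwa [Real.volume_Icc, show 2 * ρ - ρ = ρ by ring] at this

theorem isBounded_annulus_inter {E : Type*} [SeminormedAddCommGroup E] (vt : E) (a b : ℝ)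
    (C : Set E) : Bornology.IsBounded ({v | ‖v - vt‖ ∈ Icc a b} ∩ C) :=
  isBounded_closedBall.subset fun _ hv => mem_closedBall_iff_norm.2 hv.1.2

theorem two_mul_mul_pow_le_volume_real_annulus_inter_cone {d : ℕ} (hd : 1 ≤ d)
    {A : Set (EuclideanSpace ℝ (Fin d))} (hA : A ⊆ sphere 0 1) {μ : ℝ}
    (hAμ : ENNReal.ofReal μ ≤ μH[(d : ℝ) - 1] A) (vt : EuclideanSpace ℝ (Fin d)) {ρ : ℝ}
    (hρ : 0 < ρ) :
    2 * μ * ρ ^ d ≤ (2 * √d) ^ d * volume.real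
      ({v | ‖v - vt‖ ∈ Icc ρ (2 * ρ)} ∩ cone vt A) := by
  obtain ⟨k, rfl⟩ := Nat.exists_eq_add_of_le' hd
  set S := {v | ‖v - vt‖ ∈ Icc ρ (2 * ρ)} ∩ cone vt A
  have hS : volume S ≠ ∞ := (isBounded_annulus_inter vt ρ (2 * ρ) _).measure_lt_top.ne
  have hslice := ofReal_mul_hausdorffMeasure_le_annulus_inter_cone (Nat.cast_nonneg k) hA vt hρ
  have hvol := hausdorffMeasure_le_ofReal_sqrt_pow_mul_volume (ι := Fin (k + 1)) S
  simp only [Fintype.card_fin, Nat.cast_add, Nat.cast_one] at hvol hAμ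
  rw [add_sub_cancel_right] at hAμ
  have hENN : ENNReal.ofReal (ρ * μ) ≤
      ENNReal.ofReal ((2 / ρ) ^ k * √(k + 1 : ℕ) ^ (k + 1) * volume.real S) :=
    calc ENNReal.ofReal (ρ * μ) ≤ ENNReal.ofReal ρ * μH[k] A := by
          rw [ENNReal.ofReal_mul hρ.le]; gcongr
      _ ≤ ENNReal.ofReal (2 / ρ) ^ (k : ℝ) * μH[k + 1] S := hslice
      _ ≤ _ := by
          rw [ENNReal.ofReal_mul (by positivity), ENNReal.ofReal_mul (by positivity),
            ofReal_measureReal hS, ENNReal.rpow_natCast, ENNReal.ofReal_pow (by positivity),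
            mul_assoc]
          gcongr
          simpa using hvol
  have hreal := (ENNReal.ofReal_le_ofReal_iff (by positivity)).1 hENN
  calc 2 * μ * ρ ^ (k + 1) = 2 * ρ ^ k * (ρ * μ) := by ring
    _ ≤ 2 * ρ ^ k * ((2 / ρ) ^ k * √(k + 1 : ℕ) ^ (k + 1) * volume.real S) := by gcongr
    _ = (2 * √(k + 1 : ℕ)) ^ (k + 1) * volume.real S := by
        rw [div_pow]
        field_simp
        ring

theorem le_setIntegral_sub_of_two_mul_le {α : Type*} [MeasurableSpace α] {μ : Measure α}
    {g : α → ℝ} {S C : Set α} {m : ℝ} (hSC : S ⊆ C) (hS : μ S ≠ ∞) (hgC : IntegrableOn g C μ)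
    (hg : ∀ x, 0 ≤ g x) (hmass : 2 * ∫ x in C, g x ∂μ ≤ m * μ.real S) :
    ∫ x in C, g x ∂μ ≤ ∫ x in S, (m - g x) ∂μ := by
  have hgS : ∫ x in S, g x ∂μ ≤ ∫ x in C, g x ∂μ :=
    setIntegral_mono_set hgC (ae_of_all _ hg) hSC.eventuallyLE
  rw [integral_sub (integrableOn_const (C := m) hS) (hgC.mono_set hSC), setIntegral_const,
    smul_eq_mul]
  linarith

theorem ofReal_mul_setIntegral_le_setLIntegral {α : Type*} [MeasurableSpace α] {μ : Measure α}
    {f W : α → ℝ} {N C : Set α} {w : ℝ} (hN : MeasurableSet N) (hf : IntegrableOn f (N ∩ C) μ)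
    (hf0 : ∀ x, 0 ≤ f x) (hw : 0 ≤ w) (hW : ∀ x ∈ N, w ≤ W x) :
    ENNReal.ofReal (w * ∫ x in N ∩ C, f x ∂μ) ≤ ∫⁻ x in C, ENNReal.ofReal (f x * W x) ∂μ :=
  calc ENNReal.ofReal (w * ∫ x in N ∩ C, f x ∂μ)
      = ∫⁻ x in N ∩ C, ENNReal.ofReal w * ENNReal.ofReal (f x) ∂μ := by
        rw [ENNReal.ofReal_mul hw, ofReal_integral_eq_lintegral_ofReal hf (ae_of_all _ hf0),
          lintegral_const_mul' _ _ ENNReal.ofReal_ne_top]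
    _ ≤ ∫⁻ x in N ∩ C, ENNReal.ofReal (f x * W x) ∂μ := by
        rw [← Measure.restrict_restrict hN]
        refine setLIntegral_mono' hN fun x hx => ?_
        rw [← ENNReal.ofReal_mul hw, mul_comm]
        exact ENNReal.ofReal_le_ofReal (mul_le_mul_of_nonneg_left (hW x hx) (hf0 x))
    _ ≤ ∫⁻ x in C, ENNReal.ofReal (f x * W x) ∂μ := lintegral_mono_set inter_subset_right

theorem ofReal_rpow_mul_setIntegral_le_setLIntegral_annulus {E : Type*} [NormedAddCommGroup E]
    [MeasurableSpace E] [OpensMeasurableSpace E] [ProperSpace E] {μ : Measure E}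
    [IsFiniteMeasureOnCompacts μ] {g : E → ℝ} {C : Set E} {m ρ κ : ℝ} (vt : E) (hρ : 0 < ρ)
    (hκ : κ ≤ 0) (hg0 : ∀ v, 0 ≤ g v) (hgm : ∀ v, g v ≤ m) (hgC : IntegrableOn g C μ)
    (hmass : 2 * ∫ v in C, g v ∂μ ≤ m * μ.real ({v | ‖v - vt‖ ∈ Icc ρ (2 * ρ)} ∩ C)) :
    ENNReal.ofReal ((2 * ρ) ^ κ * ∫ v in C, g v ∂μ) ≤
      ∫⁻ v in C, ENNReal.ofReal ((m - g v) * ‖vt - v‖ ^ κ) ∂μ := by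
  set N := {v | ‖v - vt‖ ∈ Icc ρ (2 * ρ)}
  have hN : MeasurableSet N :=
    measurableSet_Icc.preimage (by fun_prop : Continuous fun v : E => ‖v - vt‖).measurable
  have hfin : μ (N ∩ C) ≠ ∞ := (isBounded_annulus_inter vt ρ (2 * ρ) C).measure_lt_top.ne
  have hW : ∀ v ∈ N, (2 * ρ) ^ κ ≤ ‖vt - v‖ ^ κ := fun v hv => by
    rw [norm_sub_rev]
    exact Real.rpow_le_rpow_of_nonpos (hρ.trans_le hv.1) hv.2 hκ
  calc ENNReal.ofReal ((2 * ρ) ^ κ * ∫ v in C, g v ∂μ)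
      ≤ ENNReal.ofReal ((2 * ρ) ^ κ * ∫ v in N ∩ C, (m - g v) ∂μ) := by
        gcongr
        exact le_setIntegral_sub_of_two_mul_le inter_subset_right hfin hgC hg0 hmass
    _ ≤ _ := ofReal_mul_setIntegral_le_setLIntegral hN
        ((integrableOn_const (C := m) hfin).sub (hgC.mono_set inter_subset_right))
        (fun v => sub_nonneg.2 (hgm v)) (by positivity) hW

theorem Real.div_rpow_neg_one_sub_mul_self {I M : ℝ} (hI : 0 < I) (hM : 0 < M) (a : ℝ) :
    (I / M) ^ (-1 - a) * I = M ^ (1 + a) / I ^ a := by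
  rw [Real.div_rpow hI.le hM.le, show -1 - a = -(1 + a) by ring, Real.rpow_neg hI.le,
    Real.rpow_neg hM.le, Real.rpow_add hI, Real.rpow_one]
  field_simp

/-- Lower bound for the cone integral (Lemma 7.2 of Silvestre). -/
theorem cone_integral_lower_bound
    (d : ℕ) (hd : 2 ≤ d) (ν : ℝ) (hν : 0 < ν) :
    ∃ c : ℝ, 0 < c ∧
      ∀ (mt : ℝ), 0 < mt →
      ∀ g : EuclideanSpace ℝ (Fin d) → ℝ, Measurable g →
        (∀ v', 0 ≤ g v') → (∀ v', g v' ≤ mt) →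
      ∀ (vt : EuclideanSpace ℝ (Fin d)) (A : Set (EuclideanSpace ℝ (Fin d)))
        (μ : ℝ), 0 < μ →
        A ⊆ Metric.sphere (0 : EuclideanSpace ℝ (Fin d)) 1 →
        ENNReal.ofReal μ ≤ μH[(d : ℝ) - 1] A →
        ∀ C : Set (EuclideanSpace ℝ (Fin d)),
          C = {v' : EuclideanSpace ℝ (Fin d) |
                v' ≠ vt ∧ ‖v' - vt‖⁻¹ • (v' - vt) ∈ A} →
          IntegrableOn g C →
          0 < (∫ v' in C, g v') →
          ENNReal.ofReal
              (c * mt ^ (1 + ν / d) * μ ^ (1 + ν / d) /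
                (∫ v' in C, g v') ^ (ν / (d : ℝ))) ≤
            ∫⁻ v' in C,
              ENNReal.ofReal ((mt - g v') * ‖vt - v'‖ ^ (-(d : ℝ) - ν)) := by
  refine ⟨(4 * √d) ^ (-(d : ℝ) - ν), by positivity, ?_⟩
  rintro mt hmt g - hg0 hgm vt A μ hμ hA hAμ C hC hgC hI
  set I := ∫ v' in C, g v'
  -- chosen so that the volume bound for the annular sector reads `2 I ≤ mt · vol`
  set ρ := 2 * √d * (I / (mt * μ)) ^ (d⁻¹ : ℝ)
  have hρ : 0 < ρ := by positivity
  have hmass : 2 * I ≤ mt * volume.real ({v | ‖v - vt‖ ∈ Icc ρ (2 * ρ)} ∩ C) := by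
    have hvol := two_mul_mul_pow_le_volume_real_annulus_inter_cone (by omega) hA hAμ vt hρ
    rw [show cone vt A = C from hC.symm, mul_pow, Real.rpow_inv_natCast_pow (by positivity)
      (by omega), show 2 * μ * ((2 * √d) ^ d * (I / (mt * μ))) = (2 * √d) ^ d * (2 * I / mt) by
      field_simp, mul_le_mul_iff_right₀ (by positivity), div_le_iff₀ hmt] at hvol
    linarith
  have hweight : (2 * ρ) ^ (-(d : ℝ) - ν) * I =
      (4 * √d) ^ (-(d : ℝ) - ν) * mt ^ (1 + ν / d) * μ ^ (1 + ν / d) / I ^ (ν / d) := by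
    have hexp : (d⁻¹ : ℝ) * (-(d : ℝ) - ν) = -1 - ν / d := by field_simp
    rw [show 2 * ρ = 4 * √d * (I / (mt * μ)) ^ (d⁻¹ : ℝ) by ring,
      Real.mul_rpow (by positivity) (by positivity), ← Real.rpow_mul (by positivity), hexp,
      mul_assoc, Real.div_rpow_neg_one_sub_mul_self hI (by positivity),
      Real.mul_rpow hmt.le hμ.le]
    ring
  rw [← hweight]
  exact ofReal_rpow_mul_setIntegral_le_setLIntegral_annulus vt hρ
    (by linarith [(d.cast_nonneg : (0 : ℝ) ≤ d)]) hg0 hgm hgC hmass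
end
end

section
/- Let d ≥ 1 and let M₁, E₀ > 0 and H₀ ∈ ℝ. Suppose f : ℝ^d → [0,∞) is measurable with ∫_{ℝ^d} f(v) dv ≥ M₁, ∫_{ℝ^d} |v|² f(v) dv ≤ E₀, and f·log f integrable with ∫_{ℝ^d} f(v) log f(v) dv ≤ H₀. Then there exist constants r, l, m > 0, depending only on d, M₁, E₀ and H₀, such that the Lebesgue measure of the set {v ∈ ℝ^d : f(v) > l} ∩ B_r satisfies |{v : f(v) > l} ∩ B_r| ≥ m, where B_r is the open ball of radius r centered at the origin. -/
/-! Split the mass of `f` into four parts: outside `B_r`, at most `E₀ / r²` by Chebyshev; inside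
`B_r` where `f ≤ l`, at most `l |B_r|`; where `f > K`, at most `H / log K` with `H` a bound for the
entropy of `f` on `{f > K}`, since `f ≤ f log f / log K` there; and the rest, at most
`K |{f > l} ∩ B_r|`. The bound `H = H₀ + E₀ + ∫ exp (-|v|² - 1)` comes from the Young-type
inequality `-t log t ≤ c t + exp (-c - 1)` with `c = |v|²`, which controls the negative part of
`f log f` by the energy. Choosing `r`, `l`, `K` so that the first three parts are at most `M₁ / 4`
forces `K |{f > l} ∩ B_r| ≥ M₁ / 4`. -/

open MeasureTheory Real
open scoped ENNReal

theorem neg_mul_log_le_mul_add_exp {t : ℝ} (ht : 0 ≤ t) (c : ℝ) :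
    -(t * log t) ≤ c * t + exp (-c - 1) := by
  rcases ht.eq_or_lt with rfl | ht
  · simpa using (exp_pos _).le
  have h := log_le_sub_one_of_pos (div_pos (exp_pos (-c - 1)) ht)
  rw [log_div (exp_pos _).ne' ht.ne', log_exp, le_sub_iff_add_le, le_div_iff₀ ht] at h
  linarith

theorem integrable_exp_neg_sq_norm_sub_one {V : Type*} [NormedAddCommGroup V]
    [InnerProductSpace ℝ V] [FiniteDimensional ℝ V] [MeasurableSpace V] [BorelSpace V] :
    Integrable (fun v : V => exp (-‖v‖ ^ 2 - 1)) := by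
  have h := (GaussianFourier.integrable_cexp_neg_mul_sq_norm_add (V := V) (b := 1)
    (by norm_num) 0 0).norm.const_mul (exp (-1))
  refine h.congr (Filter.Eventually.of_forall fun v => ?_)
  norm_num [Complex.norm_exp, ← exp_add, ← Complex.ofReal_pow]
  ring_nf

section
variable {α : Type*} [MeasurableSpace α] {μ : Measure α} {f : α → ℝ}

theorem integral_le_setIntegral_compl_add_mul_measureReal {B : Set α} (hf : Measurable f)
    (hfi : Integrable f μ) (hB : MeasurableSet B) (hBfin : μ B ≠ ∞) {l K : ℝ} (hl : 0 ≤ l)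
    (hK : 0 ≤ K) :
    ∫ x, f x ∂μ ≤ ∫ x in Bᶜ, f x ∂μ + l * μ.real B + K * μ.real ({x | l < f x} ∩ B)
      + ∫ x in {x | K < f x}, f x ∂μ := by
  set A := {x | l < f x} ∩ B
  set S := {x | K < f x}
  have hA : MeasurableSet A := (measurableSet_lt measurable_const hf).inter hB
  have hS : MeasurableSet S := measurableSet_lt measurable_const hf
  have hAfin : μ A ≠ ∞ := (measure_mono Set.inter_subset_right).trans_lt hBfin.lt_top |>.ne
  have iB : Integrable (Bᶜ.indicator f) μ := hfi.indicator hB.compl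
  have il : Integrable (B.indicator fun _ => l) μ :=
    (integrable_indicator_iff hB).2 (integrableOn_const hBfin)
  have iK : Integrable (A.indicator fun _ => K) μ :=
    (integrable_indicator_iff hA).2 (integrableOn_const hAfin)
  have iS : Integrable (S.indicator f) μ := hfi.indicator hS
  have hpt : ∀ x, f x ≤ Bᶜ.indicator f x + B.indicator (fun _ => l) x
      + A.indicator (fun _ => K) x + S.indicator f x := by
    classical
    intro x
    simp only [Set.indicator_apply, Set.mem_compl_iff, A, S, Set.mem_inter_iff, Set.mem_ofPred_eq]
    split_ifs <;> grind
  calc ∫ x, f x ∂μ ≤ ∫ x, (Bᶜ.indicator f x + B.indicator (fun _ => l) x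
        + A.indicator (fun _ => K) x + S.indicator f x) ∂μ :=
        integral_mono hfi (((iB.add il).add iK).add iS) hpt
    _ = _ := by
      rw [integral_add ?_ iS, integral_add ?_ iK, integral_add iB il,
        integral_indicator hB.compl, integral_indicator_const _ hB, integral_indicator_const _ hA,
        integral_indicator hS, smul_eq_mul, smul_eq_mul, mul_comm (μ.real B), mul_comm (μ.real A)]
      exacts [iB.add il, (iB.add il).add iK]

theorem setIntegral_gt_le_setIntegral_mul_log_div {K : ℝ} (hf : Measurable f)
    (hfi : Integrable f μ) (hfl : Integrable (fun x => f x * log (f x)) μ) (hK : 1 < K) :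
    ∫ x in {x | K < f x}, f x ∂μ ≤ (∫ x in {x | K < f x}, f x * log (f x) ∂μ) / log K := by
  have hlogK : 0 < log K := log_pos hK
  rw [← integral_div]
  refine setIntegral_mono_on hfi.integrableOn (hfl.div_const _).integrableOn
    (measurableSet_lt measurable_const hf) fun x (hx : K < f x) => ?_
  rw [le_div_iff₀ hlogK]
  exact mul_le_mul_of_nonneg_left (log_le_log (by linarith) hx.le) (by linarith)

theorem setIntegral_mul_log_le_integral_add {s : Set α} {c : α → ℝ} (hs : MeasurableSet s)
    (hf0 : ∀ x, 0 ≤ f x) (hc0 : ∀ x, 0 ≤ c x) (hfl : Integrable (fun x => f x * log (f x)) μ)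
    (hcf : Integrable (fun x => c x * f x) μ) (hexp : Integrable (fun x => exp (-c x - 1)) μ) :
    ∫ x in s, f x * log (f x) ∂μ ≤
      ∫ x, f x * log (f x) ∂μ + ∫ x, c x * f x ∂μ + ∫ x, exp (-c x - 1) ∂μ := by
  have hsplit := integral_add_compl hs hfl
  have hcompl : -∫ x in sᶜ, f x * log (f x) ∂μ ≤ ∫ x, c x * f x ∂μ + ∫ x, exp (-c x - 1) ∂μ :=
    calc -∫ x in sᶜ, f x * log (f x) ∂μ = ∫ x in sᶜ, -(f x * log (f x)) ∂μ :=
          (integral_neg _).symm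
      _ ≤ ∫ x in sᶜ, (c x * f x + exp (-c x - 1)) ∂μ :=
        setIntegral_mono_on hfl.neg.integrableOn (hcf.add hexp).integrableOn hs.compl
          fun x _ => neg_mul_log_le_mul_add_exp (hf0 x) (c x)
      _ ≤ ∫ x, (c x * f x + exp (-c x - 1)) ∂μ :=
        setIntegral_le_integral (hcf.add hexp) (ae_of_all _ fun x => by
          have := hf0 x; have := hc0 x; positivity)
      _ = ∫ x, c x * f x ∂μ + ∫ x, exp (-c x - 1) ∂μ := integral_add hcf hexp
  linarith

end

theorem setIntegral_compl_ball_le_div_sq {E : Type*} [SeminormedAddCommGroup E]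
    [MeasurableSpace E] [OpensMeasurableSpace E] {μ : Measure E} {f : E → ℝ} (hf0 : ∀ v, 0 ≤ f v)
    (hfi : Integrable f μ) (hf2 : Integrable (fun v => ‖v‖ ^ 2 * f v) μ) {r : ℝ} (hr : 0 < r) :
    ∫ v in (Metric.ball 0 r)ᶜ, f v ∂μ ≤ (∫ v, ‖v‖ ^ 2 * f v ∂μ) / r ^ 2 := by
  rw [← integral_div]
  calc ∫ v in (Metric.ball 0 r)ᶜ, f v ∂μ ≤ ∫ v in (Metric.ball 0 r)ᶜ, ‖v‖ ^ 2 * f v / r ^ 2 ∂μ :=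
        setIntegral_mono_on hfi.integrableOn (hf2.div_const _).integrableOn
          measurableSet_ball.compl fun v hv => by
            have hrv : r ≤ ‖v‖ := by simpa using hv
            rw [le_div_iff₀ (by positivity), mul_comm]
            exact mul_le_mul_of_nonneg_right (pow_le_pow_left₀ hr.le hrv 2) (hf0 v)
    _ ≤ ∫ v, ‖v‖ ^ 2 * f v / r ^ 2 ∂μ :=
        setIntegral_le_integral (hf2.div_const _) (ae_of_all _ fun v => by
          have := hf0 v; positivity)

theorem setIntegral_gt_le_entropy_add_energy_div_log {V : Type*} [NormedAddCommGroup V]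
    [InnerProductSpace ℝ V] [FiniteDimensional ℝ V] [MeasurableSpace V] [BorelSpace V]
    {f : V → ℝ} {K : ℝ} (hf : Measurable f) (hf0 : ∀ v, 0 ≤ f v) (hfi : Integrable f)
    (hf2 : Integrable (fun v => ‖v‖ ^ 2 * f v)) (hfl : Integrable (fun v => f v * log (f v)))
    (hK : 1 < K) :
    ∫ v in {v | K < f v}, f v ≤
      ((∫ v, f v * log (f v)) + (∫ v, ‖v‖ ^ 2 * f v) + ∫ v : V, exp (-‖v‖ ^ 2 - 1)) / log K :=
  (setIntegral_gt_le_setIntegral_mul_log_div hf hfi hfl hK).trans <|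
    div_le_div_of_nonneg_right
      (setIntegral_mul_log_le_integral_add (measurableSet_lt measurable_const hf) hf0
        (fun v => sq_nonneg ‖v‖) hfl hf2 integrable_exp_neg_sq_norm_sub_one)
      (log_pos hK).le

theorem superlevel_set_lower_bound_general
    (d : ℕ) (M₁ E₀ : ℝ) (H₀ : ℝ) (hM₁ : 0 < M₁) (hE₀ : 0 < E₀) :
    ∃ r l m : ℝ, 0 < r ∧ 0 < l ∧ 0 < m ∧
      ∀ f : EuclideanSpace ℝ (Fin d) → ℝ, Measurable f → (∀ v, 0 ≤ f v) →
        Integrable f → M₁ ≤ (∫ v, f v) →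
        Integrable (fun v : EuclideanSpace ℝ (Fin d) => ‖v‖ ^ 2 * f v) →
        (∫ v : EuclideanSpace ℝ (Fin d), ‖v‖ ^ 2 * f v) ≤ E₀ →
        Integrable (fun v : EuclideanSpace ℝ (Fin d) => f v * Real.log (f v)) →
        (∫ v : EuclideanSpace ℝ (Fin d), f v * Real.log (f v)) ≤ H₀ →
        ENNReal.ofReal m ≤
          volume ({v : EuclideanSpace ℝ (Fin d) | l < f v} ∩
            Metric.ball (0 : EuclideanSpace ℝ (Fin d)) r) := by
  set H := H₀ + E₀ + ∫ v : EuclideanSpace ℝ (Fin d), exp (-‖v‖ ^ 2 - 1) with hH_def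
  set r := √(4 * E₀ / M₁)
  set K := exp (4 * |H| / M₁ + 1)
  set B := Metric.ball (0 : EuclideanSpace ℝ (Fin d)) r
  have hr : 0 < r := sqrt_pos.2 (by positivity)
  have hB : 0 < volume.real B :=
    ENNReal.toReal_pos (Metric.measure_ball_pos _ _ hr).ne' measure_ball_lt_top.ne
  have hK : 1 < K := one_lt_exp_iff.2 (by positivity)
  refine ⟨r, M₁ / (4 * volume.real B), M₁ / (4 * K), hr, by positivity, by positivity, ?_⟩
  intro f hf hf0 hfi hM hf2 hE hfl hH
  have h_out : ∫ v in Bᶜ, f v ≤ M₁ / 4 :=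
    calc ∫ v in Bᶜ, f v ≤ (∫ v, ‖v‖ ^ 2 * f v) / r ^ 2 :=
          setIntegral_compl_ball_le_div_sq hf0 hfi hf2 hr
      _ ≤ E₀ / r ^ 2 := by gcongr
      _ = M₁ / 4 := by rw [sq_sqrt (by positivity)]; field_simp
  have h_high : ∫ v in {v | K < f v}, f v ≤ M₁ / 4 :=
    calc ∫ v in {v | K < f v}, f v ≤ H / log K :=
          (setIntegral_gt_le_entropy_add_energy_div_log hf hf0 hfi hf2 hfl hK).trans
            (div_le_div_of_nonneg_right (by linarith [hH_def]) (log_pos hK).le)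
      _ ≤ M₁ / 4 := by
          rw [log_exp, div_le_iff₀ (by positivity)]
          have : M₁ / 4 * (4 * |H| / M₁ + 1) = |H| + M₁ / 4 := by field_simp
          linarith [le_abs_self H]
  have h_split := integral_le_setIntegral_compl_add_mul_measureReal (B := B) hf hfi
    measurableSet_ball measure_ball_lt_top.ne (l := M₁ / (4 * volume.real B)) (by positivity)
    (by positivity : 0 ≤ K)
  have h_low : M₁ / (4 * volume.real B) * volume.real B = M₁ / 4 := by field_simp
  refine ENNReal.ofReal_le_of_le_toReal ?_
  rw [div_le_iff₀ (by positivity), ← measureReal_def]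
  linarith

/-- Mass, energy and entropy bounds force a lower bound on the measure of a
superlevel set inside a fixed ball (Lemma 4.6 of Silvestre). -/
theorem superlevel_set_lower_bound
    (d : ℕ) (hd : 1 ≤ d) (M₁ E₀ : ℝ) (H₀ : ℝ) (hM₁ : 0 < M₁) (hE₀ : 0 < E₀) :
    ∃ r l m : ℝ, 0 < r ∧ 0 < l ∧ 0 < m ∧
      ∀ f : EuclideanSpace ℝ (Fin d) → ℝ, Measurable f → (∀ v, 0 ≤ f v) →
        Integrable f → M₁ ≤ (∫ v, f v) →
        Integrable (fun v : EuclideanSpace ℝ (Fin d) => ‖v‖ ^ 2 * f v) →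
        (∫ v : EuclideanSpace ℝ (Fin d), ‖v‖ ^ 2 * f v) ≤ E₀ →
        Integrable (fun v : EuclideanSpace ℝ (Fin d) => f v * Real.log (f v)) →
        (∫ v : EuclideanSpace ℝ (Fin d), f v * Real.log (f v)) ≤ H₀ →
        ENNReal.ofReal m ≤
          volume ({v : EuclideanSpace ℝ (Fin d) | l < f v} ∩
            Metric.ball (0 : EuclideanSpace ℝ (Fin d)) r) :=
  superlevel_set_lower_bound_general d M₁ E₀ H₀ hM₁ hE₀
end

section
/- Let d ≥ 1, α > 0 and p ∈ (0,2]. Define the Mittag-Leffler weight w₂(v) = ℰ_{2/p}(α^{2/p} ⟨v⟩²) for v ∈ ℝ^d, where ℰ_a(x) = Σ_{k=0}^{∞} x^k / Γ(ak+1) for a > 0 and x ≥ 0. Then w₂(v) ≥ 1 for all v, the function v ↦ 1/w₂(v) is differentiable on ℝ^d, and there exists a constant C > 0 depending only on α and p such that ‖∇_v ( 1 / w₂(v) )‖ ≤ C ⟨v⟩ for all v ∈ ℝ^d. -/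
/-!
For `a ≥ 1` the Gamma function satisfies `(t + 1) Γ(a t + 1) ≤ Γ(a (t + 1) + 1)` on `t ≥ 0`.
Iterated, this dominates the Mittag-Leffler series by the exponential series, so `ℰ_a` can be
differentiated termwise; applied once, it compares the two series termwise and gives
`0 ≤ ℰ_a' ≤ ℰ_a` on `[0, ∞)`. Hence `|(1/ℰ_a)'| = ℰ_a'/ℰ_a² ≤ 1/ℰ_a ≤ 1` there, and the chain rule
through `v ↦ c (1 + |v|²)`, `c = α^{2/p}`, gives `‖∇(1/w₂)(v)‖ ≤ 2c |v| ≤ 2c ⟨v⟩`.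
-/

noncomputable section

/-- The Mittag-Leffler function `ℰ_a(x) = ∑_{k=0}^∞ x^k / Γ(ak+1)`. -/
def mittagLeffler (a x : ℝ) : ℝ :=
  ∑' k : ℕ, x ^ k / Real.Gamma (a * k + 1)

open scoped Nat

theorem Real.add_one_mul_Gamma_mul_add_one_le {a t : ℝ} (ha : 1 ≤ a) (ht : 0 ≤ t) :
    (t + 1) * Real.Gamma (a * t + 1) ≤ Real.Gamma (a * (t + 1) + 1) := by
  have hat : t ≤ a * t := le_mul_of_one_le_left ht ha
  have hΓ : 0 < Real.Gamma (a * t + 1) := Real.Gamma_pos_of_pos (by positivity)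
  calc (t + 1) * Real.Gamma (a * t + 1) ≤ (a * t + 1) * Real.Gamma (a * t + 1) := by gcongr
    _ = Real.Gamma (a * t + 1 + 1) := (Real.Gamma_add_one (by positivity)).symm
    _ ≤ Real.Gamma (a * (t + 1) + 1) :=
      Real.Gamma_strictMonoOn_Ici.monotoneOn (Set.mem_Ici.mpr (by nlinarith))
        (Set.mem_Ici.mpr (by nlinarith)) (by nlinarith)

theorem Real.factorial_le_Gamma_mul_add_one {a : ℝ} (ha : 1 ≤ a) (k : ℕ) :
    (k ! : ℝ) ≤ Real.Gamma (a * k + 1) := by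
  induction k with
  | zero => simp
  | succ k ih =>
    calc ((k + 1) ! : ℝ) = (k + 1) * k ! := by push_cast [Nat.factorial_succ]; ring
      _ ≤ (k + 1) * Real.Gamma (a * k + 1) := by gcongr
      _ ≤ Real.Gamma (a * (k + 1) + 1) := Real.add_one_mul_Gamma_mul_add_one_le ha k.cast_nonneg
      _ = Real.Gamma (a * ↑(k + 1) + 1) := by push_cast; rfl

section MittagLeffler

variable {a : ℝ}

theorem Real.Gamma_mul_natCast_add_one_pos (ha : 0 ≤ a) (k : ℕ) : 0 < Real.Gamma (a * k + 1) :=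
  Real.Gamma_pos_of_pos (by positivity)

theorem summable_mittagLeffler (ha : 1 ≤ a) (x : ℝ) :
    Summable fun k : ℕ => x ^ k / Real.Gamma (a * k + 1) := by
  refine .of_norm_bounded (Real.summable_pow_div_factorial |x|) fun k => ?_
  rw [norm_div, norm_pow, Real.norm_eq_abs, Real.norm_of_nonneg
    (Real.Gamma_mul_natCast_add_one_pos (zero_le_one.trans ha) k).le]
  gcongr
  exact Real.factorial_le_Gamma_mul_add_one ha k

def mittagLefflerDeriv (a x : ℝ) : ℝ :=
  ∑' k : ℕ, (k + 1) * x ^ k / Real.Gamma (a * (k + 1) + 1)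

theorem mittagLefflerDeriv_term_le (ha : 1 ≤ a) {x : ℝ} (hx : 0 ≤ x) (k : ℕ) :
    (k + 1) * x ^ k / Real.Gamma (a * (k + 1) + 1) ≤ x ^ k / Real.Gamma (a * k + 1) := by
  have hΓ := Real.Gamma_mul_natCast_add_one_pos (zero_le_one.trans ha) k
  rw [div_le_div_iff₀ (Real.Gamma_pos_of_pos (by positivity)) hΓ]
  nlinarith [Real.add_one_mul_Gamma_mul_add_one_le ha k.cast_nonneg, pow_nonneg hx k]

theorem summable_mittagLefflerDeriv (ha : 1 ≤ a) (x : ℝ) :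
    Summable fun k : ℕ => (k + 1) * x ^ k / Real.Gamma (a * (k + 1) + 1) := by
  refine .of_norm_bounded (summable_mittagLeffler ha |x|) fun k => ?_
  have hΓ : 0 < Real.Gamma (a * (k + 1) + 1) := Real.Gamma_pos_of_pos (by positivity)
  have hk : (0 : ℝ) ≤ k + 1 := by positivity
  simp only [norm_div, norm_mul, norm_pow, Real.norm_eq_abs, abs_of_pos hΓ, abs_of_nonneg hk]
  exact mittagLefflerDeriv_term_le ha (abs_nonneg x) k

theorem hasDerivAt_mittagLeffler (ha : 1 ≤ a) (x : ℝ) :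
    HasDerivAt (mittagLeffler a) (mittagLefflerDeriv a x) x := by
  have hΓ := Real.Gamma_mul_natCast_add_one_pos (zero_le_one.trans ha)
  set R := |x| + 1
  -- on `(-R, R)` the termwise derivatives are dominated by the derivative series at `R`
  have hu : Summable fun k : ℕ => k * R ^ (k - 1) / Real.Gamma (a * k + 1) :=
    (summable_nat_add_iff 1).mp (by simpa using summable_mittagLefflerDeriv ha R)
  have hsum : Summable fun k : ℕ => k * x ^ (k - 1) / Real.Gamma (a * k + 1) :=
    (summable_nat_add_iff 1).mp (by simpa using summable_mittagLefflerDeriv ha x)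
  have hderiv : mittagLefflerDeriv a x = ∑' k : ℕ, k * x ^ (k - 1) / Real.Gamma (a * k + 1) := by
    rw [hsum.tsum_eq_zero_add]
    simp [mittagLefflerDeriv]
  rw [hderiv]
  refine hasDerivAt_tsum_of_isPreconnected
    (g := fun (k : ℕ) (y : ℝ) => y ^ k / Real.Gamma (a * k + 1)) hu isOpen_Ioo isPreconnected_Ioo
    (fun k y _ => (hasDerivAt_pow k y).div_const _) (fun k y hy => ?_)
    (y₀ := 0) ⟨neg_lt_zero.mpr (by positivity), by positivity⟩ (summable_mittagLeffler ha 0)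
    (abs_lt.mp (lt_add_one |x|))
  rw [norm_div, norm_mul, norm_pow, Real.norm_of_nonneg (hΓ k).le, Real.norm_natCast]
  gcongr
  exact abs_le.mpr ⟨hy.1.le, hy.2.le⟩

theorem one_le_mittagLeffler (ha : 1 ≤ a) {x : ℝ} (hx : 0 ≤ x) : 1 ≤ mittagLeffler a x := by
  simpa [mittagLeffler] using (summable_mittagLeffler ha x).le_tsum 0 fun k _ =>
    div_nonneg (pow_nonneg hx k) (Real.Gamma_mul_natCast_add_one_pos (zero_le_one.trans ha) k).le

theorem mittagLefflerDeriv_nonneg (ha : 0 ≤ a) {x : ℝ} (hx : 0 ≤ x) :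
    0 ≤ mittagLefflerDeriv a x :=
  tsum_nonneg fun k => div_nonneg (by positivity) (Real.Gamma_pos_of_pos (by positivity)).le

theorem mittagLefflerDeriv_le_mittagLeffler (ha : 1 ≤ a) {x : ℝ} (hx : 0 ≤ x) :
    mittagLefflerDeriv a x ≤ mittagLeffler a x :=
  (summable_mittagLefflerDeriv ha x).tsum_le_tsum (mittagLefflerDeriv_term_le ha hx)
    (summable_mittagLeffler ha x)

theorem hasDerivAt_inv_mittagLeffler (ha : 1 ≤ a) {x : ℝ} (hx : 0 ≤ x) :
    HasDerivAt (fun y => (mittagLeffler a y)⁻¹)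
      (-mittagLefflerDeriv a x / mittagLeffler a x ^ 2) x :=
  (hasDerivAt_mittagLeffler ha x).inv (zero_lt_one.trans_le (one_le_mittagLeffler ha hx)).ne'

theorem abs_mittagLefflerDeriv_div_sq_le_one (ha : 1 ≤ a) {x : ℝ} (hx : 0 ≤ x) :
    |mittagLefflerDeriv a x / mittagLeffler a x ^ 2| ≤ 1 := by
  have h1 := one_le_mittagLeffler ha hx
  rw [abs_of_nonneg (by positivity [mittagLefflerDeriv_nonneg (zero_le_one.trans ha) hx]),
    div_le_one (by positivity)]
  nlinarith [mittagLefflerDeriv_le_mittagLeffler ha hx]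

end MittagLeffler

section RadialGradient

variable {F : Type*} [NormedAddCommGroup F] [InnerProductSpace ℝ F] [CompleteSpace F]

theorem HasDerivAt.hasGradientAt_comp_norm_sq {f : ℝ → ℝ} {f' : ℝ} {v : F}
    (hf : HasDerivAt f f' (‖v‖ ^ 2)) :
    HasGradientAt (fun w => f (‖w‖ ^ 2)) ((2 * f') • v) v := by
  rw [hasGradientAt_iff_hasFDerivAt]
  refine (hf.comp_hasFDerivAt v (hasStrictFDerivAt_norm_sq v).hasFDerivAt).congr_fderiv ?_
  ext w
  simp only [smul_apply, coe_innerSL_apply, nsmul_eq_mul, Nat.cast_ofNat, smul_eq_mul, map_smul,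
    InnerProductSpace.toDual_apply_apply]
  ring

theorem norm_gradient_comp_norm_sq_le {f f' : ℝ → ℝ} (hf : ∀ t, 0 ≤ t → HasDerivAt f (f' t) t)
    {M : ℝ} (hM : ∀ t, 0 ≤ t → |f' t| ≤ M) (v : F) :
    ‖gradient (fun w => f (‖w‖ ^ 2)) v‖ ≤ 2 * M * ‖v‖ := by
  have h := hf _ (sq_nonneg ‖v‖)
  rw [h.hasGradientAt_comp_norm_sq.gradient, norm_smul, Real.norm_eq_abs, abs_mul, abs_two]
  gcongr
  exact hM _ (sq_nonneg ‖v‖)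

end RadialGradient

theorem mittagLeffler_weight_gradient_bound_general
    (d : ℕ) (α p : ℝ) (hα : 0 < α) (hp : 0 < p) (hp2 : p ≤ 2) :
    (∀ v : EuclideanSpace ℝ (Fin d),
      1 ≤ mittagLeffler (2 / p) (α ^ (2 / p) * (1 + ‖v‖ ^ 2))) ∧
    Differentiable ℝ (fun v : EuclideanSpace ℝ (Fin d) =>
      (mittagLeffler (2 / p) (α ^ (2 / p) * (1 + ‖v‖ ^ 2)))⁻¹) ∧
    ∃ C : ℝ, 0 < C ∧
      ∀ v : EuclideanSpace ℝ (Fin d),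
        ‖gradient (fun v : EuclideanSpace ℝ (Fin d) =>
            (mittagLeffler (2 / p) (α ^ (2 / p) * (1 + ‖v‖ ^ 2)))⁻¹) v‖ ≤
          C * Real.sqrt (1 + ‖v‖ ^ 2) := by
  have ha : 1 ≤ 2 / p := (one_le_div hp).mpr hp2
  set c := α ^ (2 / p)
  have hc : 0 < c := Real.rpow_pos_of_pos hα _
  have hX : ∀ t : ℝ, 0 ≤ t → 0 ≤ c * (1 + t) := fun t ht => by positivity
  have hderiv : ∀ t : ℝ, 0 ≤ t → HasDerivAt (fun t => (mittagLeffler (2 / p) (c * (1 + t)))⁻¹)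
      (-mittagLefflerDeriv (2 / p) (c * (1 + t)) / mittagLeffler (2 / p) (c * (1 + t)) ^ 2 * c)
      t := fun t ht => by
    simpa [Function.comp_def] using (hasDerivAt_inv_mittagLeffler ha (hX t ht)).comp t
      (((hasDerivAt_id t).const_add 1).const_mul c)
  have hbound : ∀ t : ℝ, 0 ≤ t → |-mittagLefflerDeriv (2 / p) (c * (1 + t)) /
      mittagLeffler (2 / p) (c * (1 + t)) ^ 2 * c| ≤ c := fun t ht => by
    rw [abs_mul, neg_div, abs_neg, abs_of_pos hc]
    exact mul_le_of_le_one_left hc.le (abs_mittagLefflerDeriv_div_sq_le_one ha (hX t ht))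
  refine ⟨fun v => one_le_mittagLeffler ha (hX _ (sq_nonneg _)),
    fun v => (hderiv _ (sq_nonneg ‖v‖)).hasGradientAt_comp_norm_sq.differentiableAt,
    2 * c, by positivity, fun v => ?_⟩
  calc _ ≤ 2 * c * ‖v‖ := norm_gradient_comp_norm_sq_le hderiv hbound v
    _ ≤ 2 * c * Real.sqrt (1 + ‖v‖ ^ 2) := by
      gcongr
      exact Real.le_sqrt_of_sq_le (by linarith)

/-- Property (P4) for the Mittag-Leffler weight
`w₂(v) = ℰ_{2/p}(α^{2/p} ⟨v⟩²)`: it is at least `1`, its reciprocal is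
differentiable, and the gradient of the reciprocal is bounded by `C ⟨v⟩`. -/
theorem mittagLeffler_weight_gradient_bound
    (d : ℕ) (hd : 1 ≤ d) (α p : ℝ) (hα : 0 < α) (hp : 0 < p) (hp2 : p ≤ 2) :
    (∀ v : EuclideanSpace ℝ (Fin d),
      1 ≤ mittagLeffler (2 / p) (α ^ (2 / p) * (1 + ‖v‖ ^ 2))) ∧
    Differentiable ℝ (fun v : EuclideanSpace ℝ (Fin d) =>
      (mittagLeffler (2 / p) (α ^ (2 / p) * (1 + ‖v‖ ^ 2)))⁻¹) ∧
    ∃ C : ℝ, 0 < C ∧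
      ∀ v : EuclideanSpace ℝ (Fin d),
        ‖gradient (fun v : EuclideanSpace ℝ (Fin d) =>
            (mittagLeffler (2 / p) (α ^ (2 / p) * (1 + ‖v‖ ^ 2)))⁻¹) v‖ ≤
          C * Real.sqrt (1 + ‖v‖ ^ 2) :=
  mittagLeffler_weight_gradient_bound_general d α p hα hp hp2
end
end
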